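/- arXiv:2605.03449 — 3 statements merged into one kernel-verified Lean document; each statement's English description precedes it below -/
import Mathlib

section
/- Let p be a prime and let R be a finite group. Let y ∈ R be an element not in the center Z(R) such that [x,y] ∈ Z(R) for every x ∈ R and such that the subgroup [R,y] generated by {[x,y] : x ∈ R} has order p. If p is odd, suppose y has order p; if p = 2, suppose y² is the unique involution of Z(R). Fix t ∈ R with t ∉ C_R(y). Then there exists an automorphism φ of R such that φ(tⁱc) = (yt)ⁱc for every integer 0 ≤ i ≤ p−1 and every c ∈ C_R(y). -/
set_option maxHeartbeats 1000000 in
/-- Let `p` be a prime, `R` a finite group, and `y ∈ R \ Z(R)` with every commutator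
`[x,y] = x⁻¹y⁻¹xy` central and with the subgroup `[R,y]` of order `p`.  Suppose that
`y` has order `p` if `p` is odd, and that `y²` is the unique involution of `Z(R)` if
`p = 2`.  Then for any fixed `t ∉ C_R(y)` there is an automorphism `φ` of `R` with
`φ(tⁱc) = (yt)ⁱc` for all `0 ≤ i ≤ p - 1` and all `c ∈ C_R(y)`. -/
theorem stmt10 (p : ℕ) (hp : p.Prime) (R : Type*) [Group R] [Finite R] (y : R)
    (hy : y ∉ Subgroup.center R)
    (hcomm : ∀ x : R, x⁻¹ * y⁻¹ * x * y ∈ Subgroup.center R)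
    (hcard : Nat.card (Subgroup.closure {z : R | ∃ x : R, z = x⁻¹ * y⁻¹ * x * y}) = p)
    (hodd : p ≠ 2 → orderOf y = p)
    (h2 : p = 2 → y ^ 2 ∈ Subgroup.center R ∧ orderOf (y ^ 2) = 2 ∧
      ∀ z ∈ Subgroup.center R, orderOf z = 2 → z = y ^ 2)
    (t : R) (ht : t ∉ Subgroup.centralizer ({y} : Set R)) :
    ∃ φ : MulAut R, ∀ i : ℕ, i ≤ p - 1 →
      ∀ c ∈ Subgroup.centralizer ({y} : Set R), φ (t ^ i * c) = (y * t) ^ i * c := by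
  classical
  haveI : NeZero p := ⟨hp.ne_zero⟩
  set S : Set R := {z : R | ∃ x : R, z = x⁻¹ * y⁻¹ * x * y} with hS
  set K : Subgroup R := Subgroup.closure S with hK
  set χ : R → R := fun x => x⁻¹ * y⁻¹ * x * y with hχ
  have hχcen : ∀ x, ∀ g : R, g * χ x = χ x * g := fun x g =>
    Subgroup.mem_center_iff.mp (hcomm x) g
  have hχmul : ∀ a b : R, χ (a * b) = χ a * χ b := by
    intro a b
    calc χ (a * b) = b⁻¹ * χ a * (y⁻¹ * b * y) := by simp only [hχ]; group
      _ = χ a * b⁻¹ * (y⁻¹ * b * y) := by rw [hχcen a b⁻¹]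
      _ = χ a * χ b := by simp only [hχ]; group
  have hχK : ∀ x, χ x ∈ K := fun x => Subgroup.subset_closure ⟨x, rfl⟩
  set u : R := χ t with hu
  have hucen : ∀ g : R, g * u = u * g := hχcen t
  have hgu : ∀ (g : R) (m : ℕ), g * u ^ m = u ^ m * g := fun g m =>
    (Commute.pow_right (hucen g) m)
  have hχone : ∀ g : R, g * y = y * g → χ g = 1 := by
    intro g hg
    show g⁻¹ * y⁻¹ * g * y = 1
    rw [show g⁻¹ * y⁻¹ * g * y = g⁻¹ * y⁻¹ * (g * y) from by group, hg]
    group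
  have h_ty : t * y = y * t * u := by simp only [hu, hχ]; group
  have hune : u ≠ 1 := by
    intro h
    apply ht
    rw [Subgroup.mem_centralizer_singleton_iff]
    rw [h_ty, h, mul_one]
  -- order of u is p
  have hordu : orderOf u = p := by
    have hdvd : orderOf u ∣ p := by
      rw [← hcard]
      have : orderOf (⟨u, hχK t⟩ : K) = orderOf u := Subgroup.orderOf_mk u (hχK t)
      rw [← this]
      exact orderOf_dvd_natCard _
    rcases (Nat.Prime.eq_one_or_self_of_dvd hp _ hdvd) with h | h
    · exact absurd (orderOf_eq_one_iff.mp h) hune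
    · exact h
  have hup : u ^ p = 1 := by rw [← hordu]; exact pow_orderOf_eq_one u
  have hKz : K = Subgroup.zpowers u := by
    refine (Subgroup.eq_of_le_of_card_ge (Subgroup.zpowers_le.mpr (hχK t)) ?_).symm
    rw [hcard, Nat.card_zpowers, hordu]
  have upow_inj : ∀ a b : ℕ, a < p → b < p → u ^ a = u ^ b → a = b := by
    intro a b ha hb hab
    have := pow_eq_pow_iff_modEq.mp hab
    rw [hordu] at this
    rwa [Nat.ModEq, Nat.mod_eq_of_lt ha, Nat.mod_eq_of_lt hb] at this
  have hex : ∀ x : R, ∃ j : ZMod p, χ x = u ^ j.val := by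
    intro x
    have hx : χ x ∈ Subgroup.zpowers u := hKz ▸ hχK x
    obtain ⟨m, hm⟩ := mem_powers_iff_mem_zpowers.mpr hx
    refine ⟨(m : ZMod p), ?_⟩
    rw [ZMod.val_natCast, ← hordu, pow_mod_orderOf]
    exact hm.symm
  set k : R → ZMod p := fun x => Classical.choose (hex x) with hk
  have hkspec : ∀ x, χ x = u ^ (k x).val := fun x => Classical.choose_spec (hex x)
  have k_eq_of : ∀ x (j : ZMod p), χ x = u ^ j.val → k x = j := by
    intro x j hj
    have := upow_inj _ _ (ZMod.val_lt (k x)) (ZMod.val_lt j) ((hkspec x).symm.trans hj)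
    exact ZMod.val_injective p this
  have upow_mod : ∀ n : ℕ, u ^ n = u ^ ((n : ZMod p)).val := by
    intro n
    rw [ZMod.val_natCast, ← hordu, pow_mod_orderOf]
  have k_mul : ∀ a b : R, k (a * b) = k a + k b := by
    intro a b
    refine k_eq_of _ _ ?_
    rw [hχmul, hkspec a, hkspec b, ← pow_add, upow_mod, ZMod.val_add, ZMod.val_natCast]
  have k_t : k t = 1 := by
    refine k_eq_of _ _ ?_
    rw [ZMod.val_one'' (Nat.Prime.one_lt hp).ne', pow_one]
  have k_comm : ∀ g : R, g * y = y * g → k g = 0 := by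
    intro g hg
    refine k_eq_of _ _ ?_
    rw [hχone g hg, ZMod.val_zero, pow_zero]
  -- conjugation formula
  have hconj1 : ∀ x : R, x * y * x⁻¹ = y * χ x := by
    intro x
    calc x * y * x⁻¹ = y * (x * χ x) * x⁻¹ := by simp only [hχ]; group
      _ = y * (χ x * x) * x⁻¹ := by rw [hχcen x x]
      _ = y * χ x := by group
  have hconjn : ∀ (x : R) (n : ℕ), x * y ^ n * x⁻¹ = y ^ n * u ^ ((k x).val * n) := by
    intro x n
    have h1 : x * y ^ n * x⁻¹ = (x * y * x⁻¹) ^ n := (conj_pow).symm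
    rw [h1, hconj1, hkspec x]
    have hc : Commute y (u ^ (k x).val) := hgu y _
    rw [hc.mul_pow, ← pow_mul]
  -- the map E
  set E : ℕ → R := fun a => y ^ a * u ^ (a.choose 2) with hE
  have hch : ∀ n : ℕ, (n + 1).choose 2 = n.choose 2 + n := by
    intro n
    have h : (n + 1).choose 2 = n.choose 1 + n.choose 2 := Nat.choose_succ_succ n 1
    rw [Nat.choose_one_right] at h
    omega
  have hch2 : ∀ a b : ℕ, (a + b).choose 2 = a.choose 2 + b.choose 2 + a * b := by
    intro a b
    induction b with
    | zero => simp
    | succ n ih =>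
      rw [show a + (n + 1) = (a + n) + 1 from rfl, hch, ih, hch]
      ring
  have Emul : ∀ a b : ℕ, E (a + b) = E a * E b * u ^ (a * b) := by
    intro a b
    simp only [hE]
    rw [hch2, pow_add, pow_add, pow_add]
    calc y ^ a * y ^ b * (u ^ a.choose 2 * u ^ b.choose 2 * u ^ (a * b))
        = y ^ a * (y ^ b * u ^ a.choose 2) * (u ^ b.choose 2 * u ^ (a * b)) := by
          simp only [mul_assoc]
      _ = y ^ a * (u ^ a.choose 2 * y ^ b) * (u ^ b.choose 2 * u ^ (a * b)) := by
          rw [hgu (y ^ b) _]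
      _ = y ^ a * u ^ a.choose 2 * (y ^ b * u ^ b.choose 2) * u ^ (a * b) := by
          simp only [mul_assoc]
  -- key identity E p = 1
  have hEp : E p = 1 := by
    by_cases hp2 : p = 2
    · subst hp2
      obtain ⟨hc, ho, huniq⟩ := h2 rfl
      have hucenter : u ∈ Subgroup.center R :=
        Subgroup.mem_center_iff.mpr (fun g => hucen g)
      have huy : u = y ^ 2 := huniq u hucenter hordu
      simp only [hE]
      rw [show Nat.choose 2 2 = 1 from rfl, pow_one, huy]
      have h4 := pow_orderOf_eq_one (y ^ 2)
      rw [ho] at h4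
      rw [← sq]
      exact h4
    · have hyp : y ^ p = 1 := by rw [← hodd hp2]; exact pow_orderOf_eq_one y
      have hoddp : Odd p := hp.odd_of_ne_two hp2
      have heven : 2 ∣ p - 1 := (Nat.Odd.sub_odd hoddp odd_one).two_dvd
      have : p.choose 2 = p * ((p - 1) / 2) := by
        rw [Nat.choose_two_right, Nat.mul_div_assoc p heven]
      simp only [hE]
      rw [hyp, this, pow_mul, hup, one_pow, one_mul]
  have Eperiod : ∀ a : ℕ, E (a + p) = E a := by
    intro a
    rw [Emul, hEp, mul_one, mul_comm a p, pow_mul, hup, one_pow, mul_one]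
  have Emod : ∀ a b : ℕ, a % p = b % p → E a = E b := by
    have Eaux : ∀ q r : ℕ, E (r + p * q) = E r := by
      intro q
      induction q with
      | zero => simp
      | succ n ih =>
        intro r
        rw [show r + p * (n + 1) = (r + p * n) + p from by ring, Eperiod, ih]
    intro a b hab
    have ha : E a = E (a % p) := by
      conv_lhs => rw [show a = a % p + p * (a / p) from (Nat.mod_add_div a p).symm]
      exact Eaux _ _
    have hb : E b = E (b % p) := by
      conv_lhs => rw [show b = b % p + p * (b / p) from (Nat.mod_add_div b p).symm]
      exact Eaux _ _
    rw [ha, hb, hab]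
  -- E commutes with y and conjugation of E
  have hEy : ∀ n : ℕ, E n * y = y * E n := by
    intro n
    simp only [hE]
    rw [mul_assoc, ← hgu y _, ← mul_assoc, ← pow_succ, pow_succ', mul_assoc]
  have EconjE : ∀ (x : R) (n : ℕ), x * E n * x⁻¹ = E n * u ^ ((k x).val * n) := by
    intro x n
    simp only [hE]
    calc x * (y ^ n * u ^ n.choose 2) * x⁻¹
        = (x * y ^ n * x⁻¹) * (x * u ^ n.choose 2 * x⁻¹) := by group
      _ = (y ^ n * u ^ ((k x).val * n)) * u ^ n.choose 2 := by
          rw [hconjn, hgu x _]; group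
      _ = y ^ n * u ^ n.choose 2 * u ^ ((k x).val * n) := by
          rw [mul_assoc, mul_assoc, ← hgu (u ^ n.choose 2) _]
  -- the automorphism
  set φf : R → R := fun x => E (k x).val * x with hφf
  set ψf : R → R := fun x => (E (k x).val)⁻¹ * x with hψf
  have hkE : ∀ (n : ℕ) (x : R), k (E n * x) = k x := by
    intro n x
    rw [k_mul, k_comm (E n) (hEy n), zero_add]
  have hkEinv : ∀ (n : ℕ) (x : R), k ((E n)⁻¹ * x) = k x := by
    intro n x
    rw [k_mul, k_comm ((E n)⁻¹) ?_, zero_add]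
    have := hEy n
    calc (E n)⁻¹ * y = (E n)⁻¹ * y * (E n) * (E n)⁻¹ := by group
      _ = (E n)⁻¹ * (E n) * y * (E n)⁻¹ := by rw [mul_assoc ((E n)⁻¹) y (E n), ← this, ← mul_assoc]
      _ = y * (E n)⁻¹ := by group
  have map_mul : ∀ a b : R, φf (a * b) = φf a * φf b := by
    intro a b
    simp only [hφf]
    rw [k_mul]
    have h1 : E (k a + k b).val = E ((k a).val + (k b).val) := by
      apply Emod
      rw [ZMod.val_add, Nat.mod_mod_of_dvd _ dvd_rfl]
    rw [h1, Emul]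
    calc E (k a).val * E (k b).val * u ^ ((k a).val * (k b).val) * (a * b)
        = E (k a).val * ((E (k b).val * u ^ ((k a).val * (k b).val)) * a) * b := by
          simp only [mul_assoc]
      _ = E (k a).val * ((a * E (k b).val * a⁻¹) * a) * b := by rw [← EconjE]
      _ = E (k a).val * a * (E (k b).val * b) := by group
  have left_inv : ∀ x : R, ψf (φf x) = x := by
    intro x
    simp only [hφf, hψf]
    rw [hkE]
    exact inv_mul_cancel_left _ _
  have right_inv : ∀ x : R, φf (ψf x) = x := by
    intro x
    simp only [hφf, hψf]
    rw [hkEinv]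
    exact mul_inv_cancel_left _ _
  refine ⟨⟨⟨φf, ψf, left_inv, right_inv⟩, map_mul⟩, ?_⟩
  -- final computation
  have hχpow : ∀ n : ℕ, χ (t ^ n) = u ^ n := by
    intro n
    induction n with
    | zero =>
      rw [pow_zero, pow_zero]
      exact hχone 1 (by group)
    | succ n ih => rw [pow_succ, hχmul, ih, hu, pow_succ]
  have ytpow : ∀ n : ℕ, (y * t) ^ n = y ^ n * t ^ n * u ^ (n.choose 2) := by
    have tpow_y : ∀ n : ℕ, t ^ n * y = y * t ^ n * u ^ n := by
      intro n
      induction n with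
      | zero => simp
      | succ n ih =>
        calc t ^ (n + 1) * y = t ^ n * (t * y) := by rw [pow_succ, mul_assoc]
          _ = t ^ n * (y * t * u) := by rw [h_ty]
          _ = (t ^ n * y) * (t * u) := by simp only [mul_assoc]
          _ = (y * t ^ n * u ^ n) * (t * u) := by rw [ih]
          _ = y * t ^ n * (u ^ n * t) * u := by simp only [mul_assoc]
          _ = y * t ^ n * (t * u ^ n) * u := by rw [← hgu t n]
          _ = y * (t ^ n * t) * (u ^ n * u) := by simp only [mul_assoc]
          _ = y * t ^ (n + 1) * u ^ (n + 1) := by rw [← pow_succ, ← pow_succ]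
    intro n
    induction n with
    | zero => simp
    | succ n ih =>
      calc (y * t) ^ (n + 1) = (y * t) ^ n * (y * t) := pow_succ _ _
        _ = y ^ n * t ^ n * u ^ n.choose 2 * (y * t) := by rw [ih]
        _ = y ^ n * (t ^ n * (u ^ n.choose 2 * y)) * t := by simp only [mul_assoc]
        _ = y ^ n * (t ^ n * (y * u ^ n.choose 2)) * t := by rw [← hgu y _]
        _ = y ^ n * (t ^ n * y) * (u ^ n.choose 2 * t) := by simp only [mul_assoc]
        _ = y ^ n * (y * t ^ n * u ^ n) * (t * u ^ n.choose 2) := by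
            rw [tpow_y, ← hgu t _]
        _ = (y ^ n * y) * (t ^ n * (u ^ n * t) * u ^ n.choose 2) := by simp only [mul_assoc]
        _ = (y ^ n * y) * (t ^ n * (t * u ^ n) * u ^ n.choose 2) := by rw [hgu t n]
        _ = (y ^ n * y) * ((t ^ n * t) * (u ^ n * u ^ n.choose 2)) := by simp only [mul_assoc]
        _ = y ^ (n + 1) * (t ^ (n + 1) * u ^ (n + n.choose 2)) := by
            rw [← pow_succ, ← pow_succ, ← pow_add]
        _ = y ^ (n + 1) * t ^ (n + 1) * u ^ ((n + 1).choose 2) := by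
            rw [hch, Nat.add_comm (n.choose 2) n, ← mul_assoc]
  intro i hi c hc
  have hcy : c * y = y * c := Subgroup.mem_centralizer_singleton_iff.mp hc
  have hki : k (t ^ i * c) = (i : ZMod p) := by
    refine k_eq_of _ _ ?_
    rw [hχmul, hχpow, hχone c hcy, mul_one, upow_mod]
  have hival : ((i : ZMod p)).val = i := by
    rw [ZMod.val_natCast]
    exact Nat.mod_eq_of_lt (by have := hp.two_le; omega)
  show φf (t ^ i * c) = (y * t) ^ i * c
  simp only [hφf]
  rw [hki, hival, ytpow]
  simp only [hE]
  calc y ^ i * u ^ i.choose 2 * (t ^ i * c)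
      = y ^ i * (u ^ i.choose 2 * t ^ i) * c := by simp only [mul_assoc]
    _ = y ^ i * (t ^ i * u ^ i.choose 2) * c := by rw [← hgu (t ^ i) _]
    _ = y ^ i * t ^ i * u ^ i.choose 2 * c := by simp only [mul_assoc]
end

section
/- Let p be a prime and let R be a finite p-group that is not cyclic, and suppose there exists a subgroup H of R such that every automorphism of R fixing H setwise is a power automorphism. Then the center Z(R) of R is cyclic. -/
/-!
If `Z(R)` is not cyclic, it contains central elements `a`, `b` of order `p` with `b ∉ ⟨a⟩`. Choose
a normal subgroup `M` of index `p` containing `H` (any one if `H = R`). Using `a` and `b` one finds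
a central `z ∈ M` of order `p` and some `x ∉ M` with `z ∉ ⟨x⟩`. Identifying `R ⧸ M` with `⟨z⟩`
gives `f : R →* R` with kernel `M` and central image inside `M`, so `y ↦ y * f y` is an
automorphism. It fixes `M` pointwise, hence fixes `H`, but `x * f x ∉ ⟨x⟩` because `f x`
generates `⟨z⟩`.
-/

open Subgroup

section CyclicSubgroups

variable {G : Type*} [Group G] [Finite G]

theorem zpowers_eq_zpowers_pow_orderOf_div {a x : G} (hax : a ∈ zpowers x) :
    zpowers a = zpowers (x ^ (orderOf x / orderOf a)) := by
  obtain ⟨d, hd⟩ := orderOf_dvd_of_mem_zpowers hax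
  have ha0 : orderOf a ≠ 0 := (orderOf_pos a).ne'
  have hdiv : orderOf x / orderOf a = d := by rw [hd, Nat.mul_div_cancel_left _ (orderOf_pos a)]
  obtain ⟨i, rfl⟩ := hax
  have hdi : (d : ℤ) ∣ i := by
    have : (orderOf x : ℤ) ∣ i * orderOf (x ^ i) := by
      rw [orderOf_dvd_iff_zpow_eq_one, zpow_mul, zpow_natCast, pow_orderOf_eq_one]
    rw [hd, Nat.cast_mul, mul_comm i] at this
    exact Int.dvd_of_mul_dvd_mul_left (by exact_mod_cast ha0) this
  obtain ⟨j, rfl⟩ := hdi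
  refine eq_of_le_of_card_ge (zpowers_le.2 ⟨j, ?_⟩) ?_
  · simp only [hdiv, ← zpow_natCast, ← zpow_mul]
  · rw [Nat.card_zpowers, Nat.card_zpowers, ← hdiv,
      orderOf_pow_orderOf_div (orderOf_pos x).ne' (orderOf_dvd_of_mem_zpowers ⟨_, rfl⟩)]

theorem zpowers_eq_zpowers_of_orderOf_eq {a b x : G} (ha : a ∈ zpowers x) (hb : b ∈ zpowers x)
    (hab : orderOf a = orderOf b) : zpowers a = zpowers b := by
  rw [zpowers_eq_zpowers_pow_orderOf_div ha, zpowers_eq_zpowers_pow_orderOf_div hb, hab]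

theorem zpowers_eq_zpowers_of_mem_of_prime_orderOf {c w : G} (hc : (orderOf c).Prime)
    (hw : w ∈ zpowers c) (hw1 : w ≠ 1) : zpowers w = zpowers c := by
  refine zpowers_eq_zpowers_of_orderOf_eq hw (mem_zpowers c) ?_
  exact ((Nat.dvd_prime hc).1 (orderOf_dvd_of_mem_zpowers hw)).resolve_left
    (mt orderOf_eq_one_iff.1 hw1)

end CyclicSubgroups

theorem IsPGroup.exists_orderOf_eq_prime_notMem_zpowers {A : Type*} [CommGroup A] [Finite A]
    {p : ℕ} [hp : Fact p.Prime] (hA : IsPGroup p A) (hnc : ¬IsCyclic A) :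
    ∃ a b : A, orderOf a = p ∧ orderOf b = p ∧ b ∉ zpowers a := by
  obtain ⟨g, hg⟩ := Monoid.exists_orderOf_eq_exponent (Monoid.ExponentExists.of_finite (G := A))
  have hg_ne_top : zpowers g ≠ ⊤ := fun h => hnc (isCyclic_iff_exists_zpowers_eq_top.2 ⟨g, h⟩)
  obtain ⟨n, hn, hcard⟩ := (hA.to_quotient (zpowers g)).nontrivial_iff_card.1
    (QuotientGroup.nontrivial_iff.2 hg_ne_top)
  obtain ⟨q, hq⟩ := exists_prime_orderOf_dvd_card' p (hcard ▸ dvd_pow_self p hn.ne')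
  obtain ⟨y, rfl⟩ := QuotientGroup.mk_surjective q
  have hy : y ∉ zpowers g := by
    rw [← QuotientGroup.eq_one_iff]
    rintro h
    rw [h, orderOf_one] at hq
    exact hp.out.one_lt.ne hq
  obtain ⟨k, hk⟩ : ∃ k : ℤ, g ^ k = y ^ p := mem_zpowers_iff.1 <| by
    rw [← QuotientGroup.eq_one_iff, QuotientGroup.mk_pow, ← hq, pow_orderOf_eq_one]
  obtain ⟨m, hm⟩ : p ∣ orderOf g :=
    hq ▸ (orderOf_map_dvd (QuotientGroup.mk' _) y).trans (hg ▸ Monoid.order_dvd_exponent y)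
  have hm0 : (m : ℤ) ≠ 0 := by
    have := (orderOf_pos g).ne'
    rw [hm] at this
    exact_mod_cast right_ne_zero_of_mul this
  -- `g ^ k = y ^ p` has order dividing `m` since `y ^ exponent A = 1`; this forces `p ∣ k`
  obtain ⟨j, rfl⟩ : (p : ℤ) ∣ k := by
    have : (p * m : ℤ) ∣ k * m := by
      rw [← Nat.cast_mul, ← hm, orderOf_dvd_iff_zpow_eq_one, zpow_mul, hk, zpow_natCast, ← pow_mul,
        ← hm, hg, Monoid.pow_exponent_eq_one]
    exact Int.dvd_of_mul_dvd_mul_right hm0 this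
  have hb : y * g ^ (-j) ∉ zpowers g := fun h =>
    hy (by simpa using mul_mem h (zpow_mem (mem_zpowers g) j))
  refine ⟨g ^ m, y * g ^ (-j), ?_, orderOf_eq_prime ?_ fun h => hb (h ▸ one_mem _),
    fun h => hb (zpowers_le.2 (pow_mem (mem_zpowers g) m) h)⟩
  · rw [show m = orderOf g / p by rw [hm, Nat.mul_div_cancel_left _ hp.out.pos]]
    exact orderOf_pow_orderOf_div (orderOf_pos g).ne' ⟨m, hm⟩
  · rw [mul_pow, ← hk, ← zpow_natCast (g ^ (-j)), ← zpow_mul, ← zpow_add, mul_comm, neg_mul,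
      add_neg_cancel, zpow_zero]

theorem IsPGroup.exists_normal_index_eq_prime_le {G : Type*} [Group G] [Finite G] {p : ℕ}
    [hp : Fact p.Prime] (hG : IsPGroup p G) {K : Subgroup G} (hK : K ≠ ⊤) :
    ∃ M : Subgroup G, M.Normal ∧ M.index = p ∧ K ≤ M := by
  obtain ⟨n, hn⟩ := IsPGroup.iff_card.1 hG
  obtain ⟨m, hm⟩ := IsPGroup.iff_card.1 (hG.to_subgroup K)
  have hmn : m < n := by
    have hle : m ≤ n := (Nat.pow_le_pow_iff_right hp.out.one_lt).1 (hm ▸ hn ▸ K.card_le_card_group)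
    exact hle.lt_of_ne fun h => hK (K.eq_top_of_card_eq (by rw [hm, hn, h]))
  obtain ⟨M, hM, hKM⟩ := Sylow.exists_subgroup_card_pow_prime_le p (m := n - 1)
    (hn ▸ pow_dvd_pow p (n.sub_le 1)) K hm (by omega)
  have hidx : M.index = p := by
    have := M.card_mul_index
    rw [hM, hn, show n = n - 1 + 1 by omega, pow_succ] at this
    exact Nat.eq_of_mul_eq_mul_left (pow_pos hp.out.pos _) this
  refine ⟨M, normal_of_index_eq_minFac_card ?_, hidx, hKM⟩
  rw [hidx, hn, hp.out.pow_minFac (by omega)]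

theorem exists_monoidHom_ker_eq_range_eq_zpowers {G : Type*} [Group G] {p : ℕ} [Fact p.Prime]
    {M : Subgroup G} [M.Normal] (hM : M.index = p) {z : G} (hz : orderOf z = p) :
    ∃ f : G →* G, f.ker = M ∧ f.range = zpowers z := by
  let e : G ⧸ M ≃* zpowers z :=
    mulEquivOfPrimeCardEq (M.index_eq_card ▸ hM) (by rw [Nat.card_zpowers, hz])
  let f : G →* zpowers z := e.toMonoidHom.comp (QuotientGroup.mk' M)
  refine ⟨(zpowers z).subtype.comp f, ?_, ?_⟩
  · rw [MonoidHom.ker_comp_of_injective _ _ (zpowers z).subtype_injective]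
    ext y
    simp [f]
  · rw [MonoidHom.range_comp, MonoidHom.range_eq_top_of_surjective f
      (e.surjective.comp (QuotientGroup.mk'_surjective M)), ← MonoidHom.range_eq_map, range_subtype]

theorem exists_zpow_inv_mul_mem_of_index_eq_prime {G : Type*} [Group G] {p : ℕ} [Fact p.Prime]
    {M : Subgroup G} [M.Normal] (hM : M.index = p) {b : G} (hb : b ∉ M) (y : G) :
    ∃ k : ℤ, (b ^ k)⁻¹ * y ∈ M := by
  obtain ⟨k, hk⟩ := mem_zpowers_iff.1 <| mem_zpowers_of_prime_card (M.index_eq_card ▸ hM)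
    (g := (b : G ⧸ M)) (g' := y) (by rwa [ne_eq, QuotientGroup.eq_one_iff])
  exact ⟨k, QuotientGroup.eq.1 (by rw [QuotientGroup.mk_zpow, hk])⟩

section Center

variable {G : Type*} [Group G] [Finite G] {p : ℕ} [hp : Fact p.Prime]

open scoped IsMulCommutative in
theorem IsPGroup.exists_mem_center_notMem_zpowers (hG : IsPGroup p G)
    (hZ : ¬IsCyclic (center G)) :
    ∃ a ∈ center G, ∃ b ∈ center G, orderOf a = p ∧ orderOf b = p ∧ b ∉ zpowers a := by
  obtain ⟨a, b, ha, hb, hab⟩ :=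
    (hG.to_subgroup (center G)).exists_orderOf_eq_prime_notMem_zpowers hZ
  refine ⟨a, a.2, b, b.2, (orderOf_coe a).trans ha, (orderOf_coe b).trans hb, fun h => hab ?_⟩
  obtain ⟨k, hk⟩ := mem_zpowers_iff.1 h
  exact mem_zpowers_iff.2 ⟨k, Subtype.ext (by simpa using hk)⟩

theorem exists_mem_center_mem_notMem_zpowers {M : Subgroup G} [M.Normal] (hM : M.index = p)
    {a b : G} (hac : a ∈ center G) (hbc : b ∈ center G) (ha : orderOf a = p) (hb : orderOf b = p)
    (hab : b ∉ zpowers a) : ∃ z ∈ center G, z ∈ M ∧ orderOf z = p ∧ ∃ x ∉ M, z ∉ zpowers x := by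
  have ha1 : a ≠ 1 := fun h => hp.out.ne_one (ha ▸ h ▸ orderOf_one)
  have hba : a ∉ zpowers b := fun h =>
    hab (zpowers_eq_zpowers_of_mem_of_prime_orderOf (hb ▸ hp.out) h ha1 ▸ mem_zpowers b)
  by_cases hbM : b ∈ M
  · by_cases haM : a ∈ M
    · obtain ⟨x, hx⟩ : ∃ x, x ∉ M := by
        by_contra! h
        rw [(eq_top_iff' M).2 h, index_top] at hM
        exact hp.out.ne_one hM.symm
      by_cases hax : a ∈ zpowers x
      · refine ⟨b, hbc, hbM, hb, x, hx, fun hbx => hab ?_⟩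
        rw [zpowers_eq_zpowers_of_orderOf_eq hax hbx (ha.trans hb.symm)]
        exact mem_zpowers b
      · exact ⟨a, hac, haM, ha, x, hx, hax⟩
    · exact ⟨b, hbc, hbM, hb, a, haM, hab⟩
  · obtain ⟨k, hk⟩ := exists_zpow_inv_mul_mem_of_index_eq_prime hM hbM a
    have hzb : (b ^ k)⁻¹ * a ∉ zpowers b := fun h =>
      hba (by simpa using mul_mem (zpow_mem (mem_zpowers b) k) h)
    refine ⟨(b ^ k)⁻¹ * a, mul_mem (inv_mem (zpow_mem hbc k)) hac, hk,
      orderOf_eq_prime ?_ fun h => hzb (h ▸ one_mem _), b, hbM, hzb⟩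
    rw [Commute.mul_pow (mem_center_iff.1 hac _), inv_pow, ← zpow_natCast, ← zpow_mul, mul_comm,
      zpow_mul, zpow_natCast, ← hb, pow_orderOf_eq_one, one_zpow, inv_one, one_mul, hb, ← ha,
      pow_orderOf_eq_one]

end Center

namespace MonoidHom

variable {G : Type*} [Group G]

def centralAut (f : G →* G) (hc : f.range ≤ center G) (hf : f.range ≤ f.ker) : MulAut G where
  toFun y := y * f y
  invFun y := y * (f y)⁻¹
  left_inv y := by simp [mem_ker.1 (hf ⟨y, rfl⟩)]
  right_inv y := by simp [mem_ker.1 (hf ⟨y, rfl⟩)]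
  map_mul' u v := by
    rw [map_mul, mul_assoc, ← mul_assoc v, mem_center_iff.1 (hc ⟨u, rfl⟩) v]
    simp only [mul_assoc]

@[simp]
theorem centralAut_apply (f : G →* G) (hc : f.range ≤ center G) (hf : f.range ≤ f.ker) (y : G) :
    f.centralAut hc hf y = y * f y := rfl

theorem map_centralAut_eq_self_of_le_ker (f : G →* G) (hc : f.range ≤ center G)
    (hf : f.range ≤ f.ker) {H : Subgroup G} (hH : H ≤ f.ker) :
    H.map (f.centralAut hc hf).toMonoidHom = H := by
  have hfix : ∀ h ∈ H, f.centralAut hc hf h = h := fun h hh => by simp [mem_ker.1 (hH hh)]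
  ext h
  exact ⟨by rintro ⟨h', hh', rfl⟩; simpa [hfix h' hh'] using hh', fun hh => ⟨h, hh, hfix h hh⟩⟩

end MonoidHom

theorem stmt12_general (p : ℕ) (hp : p.Prime) (R : Type*) [Group R] [Finite R]
    (hpR : IsPGroup p R) (H : Subgroup R)
    (hH : ∀ α : MulAut R, Subgroup.map α.toMonoidHom H = H →
      ∀ x : R, α x ∈ Subgroup.zpowers x) :
    IsCyclic (Subgroup.center R) := by
  have : Fact p.Prime := ⟨hp⟩
  by_contra hZ
  obtain ⟨a, hac, b, hbc, ha, hb, hab⟩ := hpR.exists_mem_center_notMem_zpowers hZ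
  have : Nontrivial R := nontrivial_of_ne a 1 fun h => hp.ne_one (ha ▸ h ▸ orderOf_one)
  obtain ⟨M, _, hM, hHM⟩ : ∃ M : Subgroup R, M.Normal ∧ M.index = p ∧ (H = ⊤ ∨ H ≤ M) := by
    by_cases hH : H = ⊤
    · obtain ⟨M, hMn, hM, -⟩ := hpR.exists_normal_index_eq_prime_le (bot_ne_top (α := Subgroup R))
      exact ⟨M, hMn, hM, Or.inl hH⟩
    · obtain ⟨M, hMn, hM, hHM⟩ := hpR.exists_normal_index_eq_prime_le hH
      exact ⟨M, hMn, hM, Or.inr hHM⟩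
  obtain ⟨z, hzc, hzM, hz, x, hxM, hzx⟩ :=
    exists_mem_center_mem_notMem_zpowers hM hac hbc ha hb hab
  obtain ⟨f, hker, hrange⟩ := exists_monoidHom_ker_eq_range_eq_zpowers hM hz
  let α := f.centralAut (hrange ▸ zpowers_le.2 hzc) (hrange ▸ hker ▸ zpowers_le.2 hzM)
  have hαH : H.map α.toMonoidHom = H := by
    rcases hHM with rfl | hHM
    · exact map_top_of_surjective _ α.surjective
    · exact f.map_centralAut_eq_self_of_le_ker _ _ (hker ▸ hHM)
  have hfx : f x ∈ zpowers x :=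
    (mul_mem_cancel_left (mem_zpowers x)).1 (hH α hαH x)
  have hfz : zpowers (f x) = zpowers z :=
    zpowers_eq_zpowers_of_mem_of_prime_orderOf (hz ▸ hp) (hrange ▸ ⟨x, rfl⟩)
      fun h => hxM (hker ▸ h)
  exact hzx (zpowers_le.2 hfx (hfz ▸ mem_zpowers z))

/-- Let `p` be a prime and `R` a finite non-cyclic `p`-group admitting a subgroup `H`
such that every automorphism of `R` fixing `H` setwise is a power automorphism.  Then
the center `Z(R)` is cyclic. -/
theorem stmt12 (p : ℕ) (hp : p.Prime) (R : Type*) [Group R] [Finite R]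
    (hpR : IsPGroup p R) (hnc : ¬ IsCyclic R) (H : Subgroup R)
    (hH : ∀ α : MulAut R, Subgroup.map α.toMonoidHom H = H →
      ∀ x : R, α x ∈ Subgroup.zpowers x) :
    IsCyclic (Subgroup.center R) :=
  stmt12_general p hp R hpR H hH
end

section
/- Let p be a prime and let R be a finite p-group that is not cyclic, and suppose there exists a subgroup H of R such that every automorphism of R fixing H setwise is a power automorphism. Then the Baer norm N(R) is abelian. -/
/-!
Conjugation by an element of the norm `N` is a power automorphism, and power automorphisms
commute, so commutators of elements of `N` are central. If `N` is not abelian, a non-commuting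
pair in `N` with `|g| + |k|` minimal has `|g| = |k| = 4` and spans a quaternion group `⟨u, v⟩`
(so `p = 2`); comparing the cyclic groups `⟨x⟩` and `⟨x u⟩` shows that every `x ∈ R` conjugates
`u` to `u` or `u⁻¹`. Then `x ↦ x` on `C_R(u)`, `x ↦ x u` off it, is an automorphism, and not a
power automorphism since it sends `v` to `v u ∉ ⟨v⟩`. It fixes `H` if `u ∈ H` or `H ≤ C_R(u)`.
Otherwise some `h ∈ H` inverts `u`; conjugation by `h` fixes `H`, so `h ∈ N`, and `⟨h, u⟩` is
again quaternion, now with `h ∈ H`.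
-/

open Subgroup
open scoped commutatorElement

section

variable {G : Type*} [Group G]

section General

theorem commute_of_mem_zpowers {x y : G} (h : y ∈ zpowers x) : Commute x y := by
  obtain ⟨k, rfl⟩ := mem_zpowers_iff.mp h
  exact (Commute.refl x).zpow_right k

theorem commutatorElement_pow_right {g k : G} (h : Commute ⁅g, k⁆ k) (n : ℕ) :
    ⁅g, k ^ n⁆ = ⁅g, k⁆ ^ n := by
  have hconj : g * k * g⁻¹ = ⁅g, k⁆ * k := by rw [commutatorElement_def]; group
  rw [commutatorElement_def, ← conj_pow, hconj, h.mul_pow, mul_inv_cancel_right]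

theorem pow_mul_eq_mul_pow_mul_pow {M : Type*} [Monoid M] {a b c : M} (h : b * a = a * b * c)
    (hb : Commute c b) (n : ℕ) : b ^ n * a = a * b ^ n * c ^ n := by
  induction n with
  | zero => simp
  | succ n ih =>
    rw [pow_succ, mul_assoc, h, ← mul_assoc, ← mul_assoc, ih, mul_assoc _ (c ^ n),
      (hb.pow_left n).eq]
    simp only [pow_succ, mul_assoc]

theorem mul_pow_of_mul_eq_mul_mul {M : Type*} [Monoid M] {a b c : M} (h : b * a = a * b * c)
    (ha : Commute c a) (hb : Commute c b) (n : ℕ) :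
    (a * b) ^ n = a ^ n * b ^ n * c ^ n.choose 2 := by
  induction n with
  | zero => simp
  | succ n ih =>
    rw [pow_succ, ih, mul_assoc _ (c ^ _), ((ha.pow_left _).mul_right (hb.pow_left _)).eq,
      Nat.choose_succ_succ, Nat.choose_one_right, pow_add]
    simp only [← mul_assoc]
    rw [mul_assoc (a ^ n) (b ^ n) a, pow_mul_eq_mul_pow_mul_pow h hb]
    simp only [mul_assoc, pow_one, pow_succ b, pow_add]
    rw [← mul_assoc (c ^ n) b, (hb.pow_left n).eq, mul_assoc]

theorem mul_pow_of_commute_commutatorElement {g k : G} (hz : ∀ y, Commute ⁅g, k⁆ y) (K n : ℕ) :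
    (k ^ K * g) ^ n = k ^ (K * n) * g ^ n * ⁅g, k⁆ ^ (K * n.choose 2) := by
  have h : g * k ^ K = k ^ K * g * ⁅g, k⁆ ^ K := by
    rw [← ((hz (k ^ K * g)).pow_left K).eq, ← commutatorElement_pow_right (hz k),
      commutatorElement_def]
    group
  rw [mul_pow_of_mul_eq_mul_mul h ((hz _).pow_left K) ((hz _).pow_left K), pow_mul, pow_mul]

theorem mem_zpowers_pow_of_pow_eq_one {g y : G} {n m : ℕ} (hg : orderOf g = n * m) (hm : m ≠ 0)
    (hy : y ∈ zpowers g) (hym : y ^ m = 1) : y ∈ zpowers (g ^ n) := by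
  obtain ⟨t, rfl⟩ := mem_zpowers_iff.mp hy
  rw [← zpow_natCast, ← zpow_mul, ← orderOf_dvd_iff_zpow_eq_one, hg, Nat.cast_mul] at hym
  obtain ⟨s, rfl⟩ := (mul_dvd_mul_iff_right (by exact_mod_cast hm)).mp hym
  exact mem_zpowers_iff.mpr ⟨s, by rw [← zpow_natCast, ← zpow_mul]⟩

theorem eq_one_or_eq_of_sq_eq_one {x y z : G} (hy : y ∈ zpowers x) (hz : z ∈ zpowers x)
    (hy2 : y ^ 2 = 1) (hz2 : z ^ 2 = 1) (hz1 : z ≠ 1) : y = 1 ∨ y = z := by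
  obtain ⟨a, rfl⟩ := mem_zpowers_iff.mp hy
  obtain ⟨b, rfl⟩ := mem_zpowers_iff.mp hz
  rw [Ne, ← orderOf_dvd_iff_zpow_eq_one] at hz1
  simp only [← zpow_natCast, ← zpow_mul, ← orderOf_dvd_iff_zpow_eq_one, zpow_eq_zpow_iff_modEq,
    Int.modEq_iff_dvd, Nat.cast_ofNat] at hy2 hz2 ⊢
  obtain ⟨c, hc⟩ := hy2
  obtain ⟨d, hd⟩ := hz2
  rcases Int.even_or_odd' c with ⟨c, rfl | rfl⟩
  · exact .inl ⟨c, by linarith⟩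
  · rcases Int.even_or_odd' d with ⟨d, rfl | rfl⟩
    · exact absurd ⟨d, by linarith⟩ hz1
    · exact .inr ⟨d - c, by linarith⟩

theorem mem_zpowers_sq_of_commute {x s e : G} (he : e ∈ zpowers s) (hxe : Commute x e)
    (hxs2 : Commute x (s ^ 2)) (hxs : ¬Commute x s) : e ∈ zpowers (s ^ 2) := by
  obtain ⟨k, rfl⟩ := mem_zpowers_iff.mp he
  obtain ⟨j, rfl | rfl⟩ := Int.even_or_odd' k
  · exact mem_zpowers_iff.mpr ⟨j, by rw [← zpow_natCast, ← zpow_mul]; norm_num⟩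
  · refine absurd ?_ hxs
    have hs : s = (s ^ 2) ^ (-j) * s ^ (2 * j + 1) := by
      rw [← zpow_natCast, ← zpow_mul, ← zpow_add]; norm_num
    rw [hs]
    exact (hxs2.zpow_right _).mul_right hxe

theorem mem_zpowers_mul_cases {m z w : G} (hz2 : z ^ 2 = 1) (hmz : Commute m z)
    (hw : w ∈ zpowers (m * z)) : (∃ i : ℤ, w = (m ^ 2) ^ i) ∨ ∃ i : ℤ, w = m ^ (2 * i + 1) * z := by
  obtain ⟨k, rfl⟩ := mem_zpowers_iff.mp hw
  have hz2' : z ^ (2 : ℤ) = 1 := by exact_mod_cast hz2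
  rw [hmz.mul_zpow]
  obtain ⟨i, rfl | rfl⟩ := Int.even_or_odd' k
  · exact .inl ⟨i, by rw [zpow_mul z, hz2', one_zpow, mul_one, zpow_mul, zpow_ofNat]⟩
  · exact .inr ⟨i, by rw [zpow_add_one z, zpow_mul z, hz2', one_zpow, one_mul]⟩

theorem IsPGroup.eq_one_of_zpow_eq_one {p : ℕ} [Fact p.Prime] (hG : IsPGroup p G) {g : G} {n : ℤ}
    (hn : ¬(p : ℤ) ∣ n) (h : g ^ n = 1) : g = 1 := by
  obtain ⟨k, hk⟩ := IsPGroup.iff_orderOf.mp hG g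
  rw [← orderOf_dvd_iff_zpow_eq_one, hk] at h
  cases k with
  | zero => exact orderOf_eq_one_iff.mp (by simpa using hk)
  | succ k => exact absurd (dvd_trans (by simp [pow_succ]) h) hn

theorem IsPGroup.exists_orderOf_eq_pow_succ {p : ℕ} [Fact p.Prime] (hG : IsPGroup p G) {g : G}
    (hg : g ≠ 1) : ∃ a, orderOf g = p ^ (a + 1) := by
  obtain ⟨a, ha⟩ := IsPGroup.iff_orderOf.mp hG g
  cases a with
  | zero => exact absurd (orderOf_eq_one_iff.mp (by simpa using ha)) hg
  | succ a => exact ⟨a, ha⟩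

-- The powers of `m z` are the `m ^ j * z ^ j`; as `z ∉ ⟨x⟩`, the parity of `j` is forced.
theorem eq_one_of_mem_zpowers_mul (hG : IsPGroup 2 G) {x m z r t : G} (hm : m ∈ zpowers x)
    (hzx : z ∉ zpowers x) (hz2 : z ^ 2 = 1) (hmz : Commute m z) (hrx : r ∈ zpowers x)
    (hr : r ∈ zpowers (m * z)) (htx : t ∈ zpowers x) (ht : z * t ∈ zpowers (m * z))
    (ht2 : t ^ 2 = 1) : r = 1 := by
  rcases mem_zpowers_mul_cases hz2 hmz hr with ⟨i, rfl⟩ | ⟨i, hi⟩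
  · rcases mem_zpowers_mul_cases hz2 hmz ht with ⟨j, hj⟩ | ⟨j, hj⟩
    · refine absurd ?_ hzx
      rw [show z = (m ^ 2) ^ j * t⁻¹ by rw [← hj]; group]
      exact mul_mem (zpow_mem (pow_mem hm 2) j) (inv_mem htx)
    · have ht' : t = m ^ (2 * j + 1) := by
        rw [← mul_right_inj z, hj, (hmz.zpow_left _).eq]
      have hm2 : m ^ 2 = 1 := hG.eq_one_of_zpow_eq_one (n := 2 * j + 1) (by omega) <| by
        rw [← zpow_natCast, ← zpow_mul, mul_comm, zpow_mul, ← ht', zpow_natCast, ht2]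
      rw [hm2, one_zpow]
  · refine absurd ?_ hzx
    rw [show z = (m ^ (2 * i + 1))⁻¹ * r by rw [hi]; group]
    exact mul_mem (inv_mem (zpow_mem hm _)) hrx

theorem sq_eq_of_mem_zpowers (hG : IsPGroup 2 G) {h z : G} (hz : z ∈ zpowers h) (hzh : z ≠ h)
    (hz2 : z ^ 2 = 1) (hw : ∀ w ∈ zpowers (h ^ 2), w ^ 2 ≠ z) : h ^ 2 = z := by
  obtain ⟨k, rfl⟩ := mem_zpowers_iff.mp hz
  simp only [← zpow_natCast, ← zpow_mul, Nat.cast_ofNat] at hz2 hw ⊢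
  obtain ⟨j, rfl | rfl⟩ := Int.even_or_odd' k
  · obtain ⟨i, rfl | rfl⟩ := Int.even_or_odd' j
    · refine absurd ?_ (hw _ (zpow_mem (mem_zpowers _) i))
      rw [← zpow_mul, ← zpow_mul]; ring_nf
    · have h4 : h ^ (4 : ℤ) = 1 := hG.eq_one_of_zpow_eq_one (n := 2 * i + 1) (by omega) <| by
        rw [← zpow_mul, ← hz2]; ring_nf
      rw [show 2 * (2 * i + 1) = 4 * i + 2 by ring, zpow_add, zpow_mul, h4, one_zpow, one_mul]
  · have h2 : h ^ (2 : ℤ) = 1 := hG.eq_one_of_zpow_eq_one (n := 2 * j + 1) (by omega) <| by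
      rw [← zpow_mul, ← hz2]; ring_nf
    exact absurd (by rw [zpow_add_one, zpow_mul, h2, one_zpow, one_mul]) hzh

end General

def IsPowerAut (α : MulAut G) : Prop := ∀ x, α x ∈ zpowers x

namespace IsPowerAut

theorem mul {α β : MulAut G} (hα : IsPowerAut α) (hβ : IsPowerAut β) : IsPowerAut (α * β) := by
  intro x
  obtain ⟨n, hn⟩ := mem_zpowers_iff.mp (hβ x)
  rw [MulAut.mul_apply, ← hn, map_zpow]
  exact zpow_mem (hα x) n

theorem inv [Finite G] {α : MulAut G} (hα : IsPowerAut α) : IsPowerAut α⁻¹ := by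
  intro x
  obtain ⟨y, rfl⟩ := α.surjective x
  have heq : zpowers (α y) = zpowers y := eq_of_le_of_card_ge (zpowers_le.mpr (hα y)) <| by
    rw [Nat.card_zpowers, Nat.card_zpowers, MulEquiv.orderOf_eq]
  simp [heq]

theorem commute {α β : MulAut G} (hα : IsPowerAut α) (hβ : IsPowerAut β) : Commute α β := by
  ext x
  obtain ⟨m, hm⟩ := mem_zpowers_iff.mp (hα x)
  obtain ⟨n, hn⟩ := mem_zpowers_iff.mp (hβ x)
  simp only [MulAut.mul_apply]
  rw [← hn, map_zpow, ← hm, map_zpow, ← hn, ← zpow_mul, ← zpow_mul, mul_comm]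

end IsPowerAut

variable (G) in
def powerAuts [Finite G] : Subgroup (MulAut G) where
  carrier := {α | IsPowerAut α}
  one_mem' x := mem_zpowers x
  mul_mem' := IsPowerAut.mul
  inv_mem' := IsPowerAut.inv

variable (G) in
/-- For finite `G` this is the Baer norm `⋂ K, N_G(K)`: an element normalizes every subgroup
iff conjugation by it is a power automorphism. -/
def baerNorm [Finite G] : Subgroup G := (powerAuts G).comap MulAut.conj

section BaerNorm

variable [Finite G]

theorem mem_baerNorm_of_mem_iInf_normalizer {g : G}
    (hg : g ∈ ⨅ K : Subgroup G, normalizer (K : Set G)) : g ∈ baerNorm G := fun x =>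
  (mem_normalizer_iff.mp (mem_iInf.mp hg (zpowers x)) x).mp (mem_zpowers x)

theorem commute_commutatorElement_of_mem_baerNorm {g k : G} (hg : g ∈ baerNorm G)
    (hk : k ∈ baerNorm G) (y : G) : Commute ⁅g, k⁆ y := by
  have h : MulAut.conj ⁅g, k⁆ = 1 := by
    rw [map_commutatorElement, commutatorElement_eq_one_iff_commute]
    exact IsPowerAut.commute hg hk
  have hy := congrArg (· y) h
  simp only [MulAut.conj_apply, MulAut.one_apply] at hy
  exact mul_inv_eq_iff_eq_mul.mp hy

theorem commutatorElement_mem_zpowers_left {g : G} (hg : g ∈ baerNorm G) (x : G) :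
    ⁅x, g⁆ ∈ zpowers x := by
  rw [commutatorElement_def, mul_assoc, mul_assoc, ← mul_assoc g]
  exact mul_mem (mem_zpowers x) (by simpa using hg x⁻¹)

theorem commutatorElement_mem_zpowers_right {g : G} (hg : g ∈ baerNorm G) (x : G) :
    ⁅g, x⁆ ∈ zpowers x :=
  mul_mem (hg x) (inv_mem (mem_zpowers x))

theorem mem_zpowers_of_commutatorElement_eq_inv {g s e : G} (hg : g ∈ baerNorm G)
    (h : ⁅g, s⁆ = e⁻¹) : e ∈ zpowers s := by
  simpa [h] using inv_mem (commutatorElement_mem_zpowers_right hg s)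

-- `q` inverts `r = ⁅x, q⁆` but centralizes `(x q)²`, and `r` is an even power of `x q`.
theorem sq_commutatorElement_eq_one {q : G} (hq : q ∈ baerNorm G)
    (hq2 : ∀ y, Commute (q ^ 2) y) (x : G) : ⁅x, q⁆ ^ 2 = 1 := by
  set r := ⁅x, q⁆ with hr
  have hrx : Commute x r := commute_of_mem_zpowers (commutatorElement_mem_zpowers_left hq x)
  have hqr : q * r * q⁻¹ = r⁻¹ :=
    calc q * r * q⁻¹ = q * x * q⁻¹ * (q ^ 2 * x⁻¹ * (q ^ 2)⁻¹) := by
          rw [hr, commutatorElement_def]; group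
      _ = r⁻¹ := by
          rw [(hq2 x⁻¹).eq, mul_inv_cancel_right, hr, commutatorElement_inv, commutatorElement_def]
  by_cases hxq : Commute x q
  · rw [hr, commutatorElement_eq_one_iff_commute.mpr hxq, one_pow]
  set s := x * q
  have hxqx : Commute x (q * x * q⁻¹) := commute_of_mem_zpowers (hq x)
  have hs2 : s ^ 2 = x * (q * x * q⁻¹) * q ^ 2 := by simp only [s, pow_two]; group
  have hqs2 : Commute q (s ^ 2) := by
    have h : q * x * q * x = x * q * x * q :=
      calc q * x * q * x = q * x * q⁻¹ * (q ^ 2 * x) := by group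
        _ = x * (q * x * q⁻¹) * q ^ 2 := by rw [(hq2 x).eq, ← mul_assoc, ← hxqx.eq]
        _ = x * q * x * q := by group
    show q * s ^ 2 = s ^ 2 * q
    calc q * s ^ 2 = q * x * q * x * q := by simp only [s, pow_two]; group
      _ = s ^ 2 * q := by rw [h]; simp only [s, pow_two]; group
  have hrs : r ∈ zpowers (s ^ 2) := by
    refine mem_zpowers_sq_of_commute ?_ hrx ?_ ?_
    · exact mem_zpowers_of_commutatorElement_eq_inv hq
        (by simp only [s, hr, commutatorElement_def]; group)
    · exact hs2 ▸ ((Commute.refl x).mul_right hxqx).mul_right (hq2 x).symm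
    · exact fun h => hxq (by simpa [s] using (Commute.refl x).inv_right.mul_right h)
  obtain ⟨k, hk⟩ := mem_zpowers_iff.mp hrs
  have hqr' : Commute q r := hk ▸ hqs2.zpow_right k
  rw [pow_two, mul_eq_one_iff_eq_inv, ← hqr, hqr'.eq, mul_inv_cancel_right]

end BaerNorm

structure IsQuaternionPair [Finite G] (u v : G) : Prop where
  left_mem : u ∈ baerNorm G
  right_mem : v ∈ baerNorm G
  sq_eq_sq : u ^ 2 = v ^ 2
  sq_ne_one : u ^ 2 ≠ 1
  commute_sq : ∀ y, Commute (u ^ 2) y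
  conj_eq_inv : v * u * v⁻¹ = u⁻¹

namespace IsQuaternionPair

variable [Finite G] {u v : G} (huv : IsQuaternionPair u v)
include huv

theorem sq_sq : (u ^ 2) ^ 2 = 1 := by
  have h : v * u ^ 2 * v⁻¹ = (u ^ 2)⁻¹ := by rw [← conj_pow, huv.conj_eq_inv, inv_pow]
  rw [← (huv.commute_sq v).eq, mul_inv_cancel_right] at h
  rw [pow_two, mul_eq_one_iff_eq_inv]
  exact h

theorem not_commute : ¬Commute v u := fun h => huv.sq_ne_one <| by
  rw [pow_two, mul_eq_one_iff_eq_inv, ← huv.conj_eq_inv, h.eq, mul_inv_cancel_right]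

theorem commutatorElement_eq_one_or_eq (hG : IsPGroup 2 G) (x : G) :
    ⁅x, u⁆ = 1 ∨ ⁅x, u⁆ = u ^ 2 := by
  have hrx : ⁅x, u⁆ ∈ zpowers x := commutatorElement_mem_zpowers_left huv.left_mem x
  by_cases hzx : u ^ 2 ∈ zpowers x
  · exact eq_one_or_eq_of_sq_eq_one hrx hzx
      (sq_commutatorElement_eq_one huv.left_mem huv.commute_sq x) huv.sq_sq huv.sq_ne_one
  refine .inl (by_contra fun hr1 => ?_)
  have hxs : ¬Commute x (x * u) := fun h => hr1 <| commutatorElement_eq_one_iff_commute.mpr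
    (by simpa using (Commute.refl x).inv_right.mul_right h)
  set m := x * (u * x * u⁻¹)
  have hm : m ∈ zpowers x := mul_mem (mem_zpowers x) (huv.left_mem x)
  have hs2 : (x * u) ^ 2 = m * u ^ 2 := by simp only [m, pow_two]; group
  have hxs2 : Commute x ((x * u) ^ 2) :=
    hs2 ▸ (commute_of_mem_zpowers hm).mul_right (huv.commute_sq x).symm
  have hrvx : ⁅x, v⁆ ∈ zpowers x := commutatorElement_mem_zpowers_left huv.right_mem x
  have hr_mem : ⁅x, u⁆ ∈ zpowers (m * u ^ 2) :=
    hs2 ▸ mem_zpowers_sq_of_commute (mem_zpowers_of_commutatorElement_eq_inv huv.left_mem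
      (by simp only [commutatorElement_def]; group)) (commute_of_mem_zpowers hrx) hxs2 hxs
  have hrv_mem : u ^ 2 * ⁅x, v⁆ ∈ zpowers (m * u ^ 2) := by
    refine hs2 ▸ mem_zpowers_sq_of_commute (mem_zpowers_of_commutatorElement_eq_inv
      huv.right_mem ?_) ((huv.commute_sq x).symm.mul_right (commute_of_mem_zpowers hrvx)) hxs2 hxs
    calc ⁅v, x * u⁆ = v * x * v⁻¹ * (v * u * v⁻¹) * u⁻¹ * x⁻¹ := by
          simp only [commutatorElement_def]; group
      _ = v * x * v⁻¹ * ((u ^ 2)⁻¹ * x⁻¹) := by rw [huv.conj_eq_inv]; group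
      _ = v * x * v⁻¹ * (x⁻¹ * (u ^ 2)⁻¹) := by rw [(huv.commute_sq x⁻¹).inv_left.eq]
      _ = (u ^ 2 * ⁅x, v⁆)⁻¹ := by simp only [commutatorElement_def]; group
  exact hr1 (eq_one_of_mem_zpowers_mul hG hm hzx huv.sq_sq (huv.commute_sq m).symm hrx hr_mem
    hrvx hrv_mem (sq_commutatorElement_eq_one huv.right_mem (huv.sq_eq_sq ▸ huv.commute_sq) x))

theorem prime_eq_two {p : ℕ} [Fact p.Prime] (hG : IsPGroup p G) : p = 2 := by
  obtain ⟨n, hn⟩ := IsPGroup.iff_orderOf.mp hG (u ^ 2)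
  rw [orderOf_eq_prime huv.sq_sq huv.sq_ne_one] at hn
  exact (Nat.prime_two.pow_eq_iff.mp hn.symm).1

theorem conj_eq_inv_of_not_commute (hG : IsPGroup 2 G) (x : G) (hx : ¬Commute x u) :
    x * u * x⁻¹ = u⁻¹ := by
  have hc := (huv.commutatorElement_eq_one_or_eq hG x).resolve_left
    (mt commutatorElement_eq_one_iff_commute.mp hx)
  have hu2 : u ^ 2 = (u ^ 2)⁻¹ := mul_eq_one_iff_eq_inv.mp (by rw [← pow_two, huv.sq_sq])
  calc x * u * x⁻¹ = ⁅x, u⁆ * u := by rw [commutatorElement_def]; group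
    _ = u⁻¹ := by rw [hc, hu2]; group

theorem of_not_commute (hG : IsPGroup 2 G) {h : G} (hh : h ∈ baerNorm G)
    (hhu : ¬Commute h u) : IsQuaternionPair h u := by
  have hc : ⁅h, u⁆ = u ^ 2 := (huv.commutatorElement_eq_one_or_eq hG h).resolve_left
    (mt commutatorElement_eq_one_iff_commute.mp hhu)
  have hu_mem : u ∉ zpowers h := fun hu => hhu (commute_of_mem_zpowers hu)
  have hh2u : Commute (h ^ 2) u := by
    refine mul_inv_eq_iff_eq_mul.mp ?_
    calc h ^ 2 * u * (h ^ 2)⁻¹ = h * ⁅h, u⁆ * h⁻¹ * (⁅h, u⁆ * u) := by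
          rw [commutatorElement_def, pow_two]; group
      _ = u := by
          rw [hc, ← (huv.commute_sq h).eq, mul_inv_cancel_right, ← mul_assoc, ← pow_two,
            huv.sq_sq, one_mul]
  -- A square root `w ∈ ⟨h²⟩` of `u²` would make `u w` an involution that `h` moves to `u² u w`.
  have hh2 : h ^ 2 = u ^ 2 := by
    refine sq_eq_of_mem_zpowers hG (hc ▸ commutatorElement_mem_zpowers_left huv.left_mem h)
      (fun he => hhu (he ▸ huv.commute_sq u)) huv.sq_sq fun w hw hw2 => ?_
    have hwh : w ∈ zpowers h := zpowers_le.mpr (pow_mem (mem_zpowers h) 2) hw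
    obtain ⟨k, rfl⟩ := mem_zpowers_iff.mp hw
    set w := (h ^ 2) ^ k
    have hhw : Commute h w := ((Commute.refl h).pow_right 2).zpow_right k
    have hcw : ⁅h, u * w⁆ = u ^ 2 :=
      calc ⁅h, u * w⁆ = h * u * (w * h⁻¹) * w⁻¹ * u⁻¹ := by rw [commutatorElement_def]; group
        _ = ⁅h, u⁆ := by rw [← hhw.inv_left.eq, commutatorElement_def]; group
        _ = u ^ 2 := hc
    have huw2 : (u * w) ^ 2 = 1 := by
      rw [(hh2u.zpow_left k).symm.mul_pow, hw2, ← pow_two, huv.sq_sq]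
    by_cases huw1 : u * w = 1
    · exact hu_mem (eq_inv_of_mul_eq_one_left huw1 ▸ inv_mem hwh)
    rcases eq_one_or_eq_of_sq_eq_one (hcw ▸ commutatorElement_mem_zpowers_right hh (u * w))
      (mem_zpowers _) huv.sq_sq huw2 huw1 with h1 | huw
    · exact huv.sq_ne_one h1
    · exact hu_mem (mul_left_cancel (pow_two u ▸ huw) ▸ hwh)
  refine ⟨hh, huv.left_mem, hh2, hh2 ▸ huv.sq_ne_one, hh2 ▸ huv.commute_sq, ?_⟩
  calc u * h * u⁻¹ = ⁅h, u⁆⁻¹ * h := by rw [commutatorElement_def]; group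
    _ = h⁻¹ := by rw [hc, ← hh2]; group

end IsQuaternionPair

theorem isQuaternionPair_of_orderOf_eq_four [Finite G] {g k : G} (hg : g ∈ baerNorm G)
    (hk : k ∈ baerNorm G) (hgk : ¬Commute g k) (hz2 : ⁅g, k⁆ ^ 2 = 1) (hg4 : orderOf g = 4)
    (hk4 : orderOf k = 4) : IsQuaternionPair g k := by
  have hz1 : ⁅g, k⁆ ≠ 1 := mt commutatorElement_eq_one_iff_commute.mp hgk
  have hsq : ∀ x : G, orderOf x = 4 → ⁅g, k⁆ ∈ zpowers x → x ^ 2 = ⁅g, k⁆ := by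
    intro x hx hzx
    have hx2 : x ^ 2 ≠ 1 := fun h => by
      have := orderOf_dvd_of_pow_eq_one h
      rw [hx] at this
      norm_num at this
    have hx4 : (x ^ 2) ^ 2 = 1 := by
      rw [← pow_mul, show 2 * 2 = orderOf x by rw [hx], pow_orderOf_eq_one]
    exact ((eq_one_or_eq_of_sq_eq_one hzx (pow_mem (mem_zpowers x) 2) hz2 hx4 hx2).resolve_left
      hz1).symm
  have hg2 := hsq g hg4 (commutatorElement_mem_zpowers_left hk g)
  have hk2 := hsq k hk4 (commutatorElement_mem_zpowers_right hg k)
  refine ⟨hg, hk, hg2.trans hk2.symm, hg2 ▸ hz1,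
    hg2 ▸ commute_commutatorElement_of_mem_baerNorm hg hk, ?_⟩
  calc k * g * k⁻¹ = ⁅g, k⁆⁻¹ * g := by rw [commutatorElement_def]; group
    _ = g⁻¹ := by rw [← hg2]; group

section MulOffCentralizer

open Classical in
noncomputable def mulOffCentralizer (u : G) (hu : ∀ x, ¬Commute x u → x * u * x⁻¹ = u⁻¹) :
    G →* G where
  toFun x := if Commute x u then x else x * u
  map_one' := by simp
  map_mul' x y := by
    have hinv : ∀ x, ¬Commute x u → x * u = u⁻¹ * x := fun x hx => by
      rw [← hu x hx, inv_mul_cancel_right]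
    have hinv' : ∀ x, ¬Commute x u → x * u⁻¹ = u * x := fun x hx =>
      calc x * u⁻¹ = (x * u * x⁻¹)⁻¹ * x := by group
        _ = u * x := by rw [hu x hx, inv_inv]
    by_cases hx : Commute x u <;> by_cases hy : Commute y u
    · simp [hx, hy, hx.mul_left hy]
    · have hxy : ¬Commute (x * y) u := fun h => hy (by simpa using hx.inv_left.mul_left h)
      simp [hx, hy, hxy, mul_assoc]
    · have hxy : ¬Commute (x * y) u := fun h => hx (by simpa using h.mul_left hy.inv_left)
      simp only [hx, hy, hxy, if_true, if_false]
      rw [mul_assoc x u, ← hy.eq, mul_assoc]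
    · have hxy : Commute (x * y) u := by
        show x * y * u = u * (x * y)
        rw [mul_assoc, hinv y hy, ← mul_assoc, hinv' x hx, mul_assoc]
      simp only [hx, hy, hxy, if_true, if_false]
      rw [mul_assoc x u, ← mul_assoc u, mul_assoc u, hinv y hy, mul_inv_cancel_left]

variable {u : G} (hu : ∀ x, ¬Commute x u → x * u * x⁻¹ = u⁻¹)
include hu

theorem mulOffCentralizer_apply_of_commute {x : G} (hx : Commute x u) :
    mulOffCentralizer u hu x = x := if_pos hx

theorem mulOffCentralizer_apply_of_not_commute {x : G} (hx : ¬Commute x u) :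
    mulOffCentralizer u hu x = x * u := if_neg hx

theorem mulOffCentralizer_injective : Function.Injective (mulOffCentralizer u hu) := by
  have hmul : ∀ x, ¬Commute x u → ¬Commute (x * u) u := fun x hx h =>
    hx (by simpa using h.mul_left (Commute.refl u).inv_left)
  intro x y hxy
  by_cases hx : Commute x u <;> by_cases hy : Commute y u <;>
    simp only [mulOffCentralizer_apply_of_commute, mulOffCentralizer_apply_of_not_commute,
      hx, hy, not_false_eq_true] at hxy
  · exact hxy
  · exact absurd (hxy ▸ hx) (hmul y hy)
  · exact absurd (hxy ▸ hy) (hmul x hx)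
  · exact mul_right_cancel hxy

theorem exists_mulAut_map_eq_not_isPowerAut [Finite G] {v : G} (hv : ¬Commute v u)
    (H : Subgroup G) (hH : u ∈ H ∨ ∀ h ∈ H, Commute h u) :
    ∃ α : MulAut G, H.map α.toMonoidHom = H ∧ ¬IsPowerAut α := by
  let α := MulEquiv.ofBijective (mulOffCentralizer u hu)
    (Finite.injective_iff_bijective.mp (mulOffCentralizer_injective hu))
  refine ⟨α, eq_of_le_of_card_ge ?_ ?_, fun hα => hv ?_⟩
  · refine map_le_iff_le_comap.mpr fun x hx => ?_
    by_cases hxu : Commute x u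
    · simpa [α, mulOffCentralizer_apply_of_commute hu hxu] using hx
    · have hu' : u ∈ H := hH.resolve_right fun h => hxu (h x hx)
      simpa [α, mulOffCentralizer_apply_of_not_commute hu hxu] using mul_mem hx hu'
  · rw [card_map_of_injective (f := α.toMonoidHom) α.injective]
  · have hvu := hα v
    simp only [α, MulEquiv.ofBijective_apply, mulOffCentralizer_apply_of_not_commute hu hv] at hvu
    exact commute_of_mem_zpowers (by simpa using mul_mem (inv_mem (mem_zpowers v)) hvu)

end MulOffCentralizer

section MinimalPair

variable [Finite G] {p : ℕ} [hp : Fact p.Prime]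

theorem IsPGroup.orderOf_pow_lt (hG : IsPGroup p G) {k : G} (hk : k ≠ 1) :
    orderOf (k ^ p) < orderOf k := by
  obtain ⟨b, hb⟩ := hG.exists_orderOf_eq_pow_succ hk
  rw [orderOf_pow_of_dvd hp.out.ne_zero (hb ▸ dvd_pow_self p b.succ_ne_zero)]
  exact Nat.div_lt_self (orderOf_pos k) hp.out.one_lt

theorem zpowers_eq_zpowers_pow {g z : G} {a : ℕ} (hg : orderOf g = p ^ (a + 1))
    (hz : z ∈ zpowers g) (hz1 : z ≠ 1) (hzp : z ^ p = 1) : zpowers z = zpowers (g ^ p ^ a) := by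
  have hmem := mem_zpowers_pow_of_pow_eq_one (by rw [hg, pow_succ]) hp.out.ne_zero hz hzp
  refine eq_of_le_of_card_ge (zpowers_le.mpr hmem) ?_
  rw [Nat.card_zpowers, Nat.card_zpowers, orderOf_eq_prime hzp hz1,
    orderOf_pow_of_dvd (pow_ne_zero _ hp.out.ne_zero) (hg ▸ pow_dvd_pow p a.le_succ), hg,
    pow_succ, Nat.mul_div_cancel_left _ (pow_pos hp.out.pos a)]

-- With `K` chosen so that `k ^ (K * p ^ a) = g ^ (-p ^ a)`, the element `k ^ K * g` still fails
-- to commute with `k`, and its `p ^ a`-th power is `⁅g, k⁆ ^ (K * (p ^ a).choose 2)`, which is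
-- trivial unless `p = 2` and `|g| = |k| = 4`.
theorem exists_orderOf_lt_of_not_commute (hG : IsPGroup p G) {g k : G} (hg : g ∈ baerNorm G)
    (hk : k ∈ baerNorm G) (hgk : ¬Commute g k) (hle : orderOf g ≤ orderOf k)
    (hzp : ⁅g, k⁆ ^ p = 1) (hQ : ¬(p = 2 ∧ orderOf g = 4 ∧ orderOf k = 4)) :
    ∃ x ∈ baerNorm G, ¬Commute x k ∧ orderOf x < orderOf g := by
  have hz1 : ⁅g, k⁆ ≠ 1 := mt commutatorElement_eq_one_iff_commute.mp hgk
  obtain ⟨a, ha⟩ := hG.exists_orderOf_eq_pow_succ (g := g) (by rintro rfl; exact hgk (.one_left k))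
  obtain ⟨b, hb⟩ := hG.exists_orderOf_eq_pow_succ (g := k) (by rintro rfl; exact hgk (.one_right g))
  have hab : a ≤ b := by
    rw [ha, hb] at hle
    exact Nat.succ_le_succ_iff.mp ((Nat.pow_le_pow_iff_right hp.out.one_lt).mp hle)
  have hzg := zpowers_eq_zpowers_pow ha (commutatorElement_mem_zpowers_left hk g) hz1 hzp
  have hzk := zpowers_eq_zpowers_pow hb (commutatorElement_mem_zpowers_right hg k) hz1 hzp
  obtain ⟨c, hc⟩ : ∃ c : ℕ, (k ^ p ^ b) ^ c = (g ^ p ^ a)⁻¹ :=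
    mem_powers_iff_mem_zpowers.mpr (hzk ▸ hzg ▸ inv_mem (mem_zpowers _))
  set K := p ^ (b - a) * c
  refine ⟨k ^ K * g, mul_mem (pow_mem hk K) hg, fun h => hz1 ?_, ?_⟩
  · have hconj : ⁅k ^ K * g, k⁆ = k ^ K * ⁅g, k⁆ * (k ^ K)⁻¹ := by
      simp only [commutatorElement_def]; group
    rw [← commutatorElement_eq_one_iff_commute, hconj] at h
    simpa using h
  have hx : (k ^ K * g) ^ p ^ a = 1 := by
    rw [mul_pow_of_commute_commutatorElement (commute_commutatorElement_of_mem_baerNorm hg hk),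
      show K * p ^ a = p ^ b * c by
        rw [mul_comm, ← mul_assoc, ← pow_add, Nat.add_sub_cancel' hab, mul_comm],
      pow_mul, hc, inv_mul_cancel, one_mul, ← orderOf_dvd_iff_pow_eq_one, orderOf_eq_prime hzp hz1]
    rcases hab.lt_or_eq with hlt | rfl
    · exact Dvd.dvd.mul_right (Dvd.dvd.mul_right (dvd_pow_self p (by omega)) c) _
    · refine Dvd.dvd.mul_left (hp.out.dvd_choose_pow two_ne_zero fun h2 => hQ ?_) _
      obtain ⟨rfl, rfl⟩ := Nat.prime_two.pow_eq_iff.mp h2.symm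
      exact ⟨rfl, ha, hb⟩
  calc orderOf (k ^ K * g) ≤ p ^ a := orderOf_le_of_pow_eq_one (pow_pos hp.out.pos a) hx
    _ < orderOf g := ha ▸ Nat.pow_lt_pow_right hp.out.one_lt a.lt_succ_self

theorem exists_isQuaternionPair (hG : IsPGroup p G) {g k : G} (hg : g ∈ baerNorm G)
    (hk : k ∈ baerNorm G) (hgk : ¬Commute g k) : ∃ u v : G, IsQuaternionPair u v := by
  induction hn : orderOf g + orderOf k using Nat.strong_induction_on generalizing g k with
  | _ n ih =>
  wlog hle : orderOf g ≤ orderOf k generalizing g k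
  · exact this hk hg (fun h => hgk h.symm) (by omega) (by omega)
  by_cases hzp : ⁅g, k⁆ ^ p = 1
  · by_cases hQ : p = 2 ∧ orderOf g = 4 ∧ orderOf k = 4
    · obtain ⟨rfl, hg4, hk4⟩ := hQ
      exact ⟨g, k, isQuaternionPair_of_orderOf_eq_four hg hk hgk hzp hg4 hk4⟩
    · obtain ⟨x, hx, hxk, hlt⟩ := exists_orderOf_lt_of_not_commute hG hg hk hgk hle hzp hQ
      exact ih _ (by omega) hx hk hxk rfl
  · have hk1 : k ≠ 1 := by rintro rfl; exact hgk (.one_right g)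
    have hlt := hG.orderOf_pow_lt hk1
    refine ih _ (by omega) hg (pow_mem hk p) (fun h => hzp ?_) rfl
    rwa [← commutatorElement_pow_right (commute_commutatorElement_of_mem_baerNorm hg hk k),
      commutatorElement_eq_one_iff_commute]

end MinimalPair

end

theorem stmt13_general (p : ℕ) (hp : p.Prime) (R : Type*) [Group R] [Finite R]
    (hpR : IsPGroup p R) (H : Subgroup R)
    (hH : ∀ α : MulAut R, Subgroup.map α.toMonoidHom H = H →
      ∀ x : R, α x ∈ Subgroup.zpowers x) :
    ∀ a ∈ (⨅ K : Subgroup R, Subgroup.normalizer (K : Set R)), ∀ b ∈ (⨅ K : Subgroup R, Subgroup.normalizer (K : Set R)),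
      a * b = b * a := by
  intro a ha b hb
  by_contra hab
  have := Fact.mk hp
  obtain ⟨u, v, huv⟩ := exists_isQuaternionPair hpR (mem_baerNorm_of_mem_iInf_normalizer ha)
    (mem_baerNorm_of_mem_iInf_normalizer hb) hab
  obtain rfl : p = 2 := huv.prime_eq_two hpR
  obtain ⟨u, v, huv, huH⟩ : ∃ u v : R, IsQuaternionPair u v ∧ (u ∈ H ∨ ∀ h ∈ H, Commute h u) := by
    by_cases hc : ∀ h ∈ H, Commute h u
    · exact ⟨u, v, huv, .inr hc⟩
    obtain ⟨h, hhH, hhu⟩ := not_forall₂.mp hc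
    have hh : h ∈ baerNorm R :=
      hH (MulAut.conj h) (mem_normalizer_iff_map_conj_eq.mp (le_normalizer hhH))
    exact ⟨h, u, huv.of_not_commute hpR hh hhu, .inl hhH⟩
  obtain ⟨α, hαH, hα⟩ := exists_mulAut_map_eq_not_isPowerAut
    (huv.conj_eq_inv_of_not_commute hpR) huv.not_commute H huH
  exact hα (hH α hαH)

/-- Let `p` be a prime and `R` a finite non-cyclic `p`-group admitting a subgroup `H`
such that every automorphism of `R` fixing `H` setwise is a power automorphism.  Then
the Baer norm `N(R) = ⋂_{K ≤ R} N_R(K)` is abelian. -/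
theorem stmt13 (p : ℕ) (hp : p.Prime) (R : Type*) [Group R] [Finite R]
    (hpR : IsPGroup p R) (hnc : ¬ IsCyclic R) (H : Subgroup R)
    (hH : ∀ α : MulAut R, Subgroup.map α.toMonoidHom H = H →
      ∀ x : R, α x ∈ Subgroup.zpowers x) :
    ∀ a ∈ (⨅ K : Subgroup R, Subgroup.normalizer (K : Set R)), ∀ b ∈ (⨅ K : Subgroup R, Subgroup.normalizer (K : Set R)),
      a * b = b * a :=
  stmt13_general p hp R hpR H hH
end
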